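/- arXiv:2412.03750 — 6 statements merged into one kernel-verified Lean document; each statement's English description precedes it below -/
import Mathlib

section
/- Let [i_1,j_1], [i_2,j_2], [i_3,j_3] be elements of 𝕀_n such that the pair ([i_2,j_2],[i_3,j_3]) is connected and such that [i_1,j_1] does not overlap [i_2,j_2] and does not overlap [i_3,j_3]. Then [i_1,j_1] does not overlap [i_2,j_3], and [i_1,j_1] does not overlap [i_3,j_2]. -/
namespace AltSnakePaper

/-- `[i,j] ∈ 𝕀ₙ`: the interval condition `0 ≤ j - i ≤ n + 1`. -/
def InIn (n : ℕ) (i j : ℤ) : Prop := 0 ≤ j - i ∧ j - i ≤ (n : ℤ) + 1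

/-- The intervals `[i1,j1]` and `[i2,j2]` overlap. -/
def Overlap (i1 j1 i2 j2 : ℤ) : Prop :=
  (i1 < i2 ∧ i2 ≤ j1 ∧ j1 < j2) ∨ (i2 < i1 ∧ i1 ≤ j2 ∧ j2 < j1)

/-- The pair `([i1,j1],[i2,j2])` is connected. -/
def ConnPair (n : ℕ) (i1 j1 i2 j2 : ℤ) : Prop :=
  Overlap i1 j1 i2 j2 ∧ InIn n i1 j2 ∧ InIn n i2 j1

/-- The subtuple `𝐬(a,b)` (entries with indices `a+1, …, b`) lies in `S_→`. -/
def SRight (ii jj : ℕ → ℤ) (a b : ℕ) : Prop :=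
  ∀ s, a + 1 ≤ s → s + 1 ≤ b → ii s < ii (s + 1) ∧ jj s < jj (s + 1)

/-- The subtuple `𝐬(a,b)` (entries with indices `a+1, …, b`) lies in `S_←`. -/
def SLeft (ii jj : ℕ → ℤ) (a b : ℕ) : Prop :=
  ∀ s, a + 1 ≤ s → s + 1 ≤ b → ii (s + 1) < ii s ∧ jj (s + 1) < jj s

/-- `(𝐬, r(𝐬))` is an alternating snake, where `𝐬 = ([i_1,j_1],…,[i_r,j_r])`
(encoded by `ii jj : ℕ → ℤ`, entries indexed `1,…,r`) and
`r(𝐬) = (r_0, r_1, …, r_k)` (encoded by `rr : ℕ → ℕ`). -/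
structure IsAltSnake (n r k : ℕ) (rr : ℕ → ℕ) (ii jj : ℕ → ℤ) : Prop where
  hr : 1 ≤ r
  hk : k ≤ r
  mem : ∀ s, 1 ≤ s → s ≤ r → InIn n (ii s) (jj s)
  distinct : ∀ s p, 1 ≤ s → s ≤ r → 1 ≤ p → p ≤ r → s ≠ p → ii s ≠ ii p ∨ jj s ≠ jj p
  rr0 : rr 0 = 1
  rrk : rr k = r
  rrmono : ∀ m, m < k → rr m < rr (m + 1)
  mono : ∀ m, 1 ≤ m → m ≤ k →
      SRight ii jj (rr (m - 1) - 1) (rr m) ∨ SLeft ii jj (rr (m - 1) - 1) (rr m)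
  alt : ∀ m, 1 ≤ m → m < k →
      (SRight ii jj (rr (m - 1) - 1) (rr m) ↔ SLeft ii jj (rr m - 1) (rr (m + 1)))
  nonoverlap : ∀ m s t, 1 ≤ m → m < k → 1 ≤ s → s < rr m → rr m < t → t ≤ r →
      ¬ Overlap (ii s) (jj s) (ii t) (jj t)

/-- The subtuple `𝐬(a,b)` is connected: all consecutive pairs are connected. -/
def SegConnected (n : ℕ) (ii jj : ℕ → ℤ) (a b : ℕ) : Prop :=
  ∀ s, a + 1 ≤ s → s + 1 ≤ b → ConnPair n (ii s) (jj s) (ii (s + 1)) (jj (s + 1))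

/-- The subtuple `𝐬(a,b)` (with its induced r-vector, whose internal break points
are the `rr m` with `a + 1 < rr m < b`) is prime. -/
def SegPrime (n k : ℕ) (rr : ℕ → ℕ) (ii jj : ℕ → ℤ) (a b : ℕ) : Prop :=
  SegConnected n ii jj a b ∧
    ∀ m, 1 ≤ m → m < k → a + 1 < rr m → rr m < b →
      ii (rr m - 1) ≠ ii (rr m + 1) ∧ jj (rr m - 1) ≠ jj (rr m + 1)

/-- The subtuple `𝐬(a,b)` (with its induced r-vector) is stable. -/
def SegStable (k : ℕ) (rr : ℕ → ℕ) (ii jj : ℕ → ℤ) (a b : ℕ) : Prop :=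
  ∀ m, 1 ≤ m → m < k → a + 1 < rr m → rr m < b →
    (ii (rr m + 1) < ii (rr m - 1) → jj (rr m + 1) < ii (rr m - 1)) ∧
    (jj (rr m - 1) < jj (rr m + 1) → jj (rr m - 1) < ii (rr m + 1))

/-- The alternating snake is stable. -/
def Stable (k : ℕ) (rr : ℕ → ℕ) (ii jj : ℕ → ℤ) : Prop :=
  ∀ m, 1 ≤ m → m < k →
    (ii (rr m + 1) < ii (rr m - 1) → jj (rr m + 1) < ii (rr m - 1)) ∧
    (jj (rr m - 1) < jj (rr m + 1) → jj (rr m - 1) < ii (rr m + 1))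

/-- The boundary condition allowing a cut of the snake at `p = rr m - ε`:
`a_{r_m-1} = a_{r_m+1}` for some `a ∈ {i, j}`, with `ε ∈ {0,1}` chosen so that, `b`
denoting the other member of `{i,j}`, one has `b_{r_m−1+2ε} < b_{r_m+1−2ε}` if
`𝐬(r_m−2, r_m) ∈ S_←` and `b_{r_m+1−2ε} < b_{r_m−1+2ε}` if `𝐬(r_m−2, r_m) ∈ S_→`. -/
def BoundaryCond (k : ℕ) (rr : ℕ → ℕ) (ii jj : ℕ → ℤ) (m ε : ℕ) : Prop :=
  (ii (rr m - 1) = ii (rr m + 1) ∧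
    (SLeft ii jj (rr m - 2) (rr m) → jj (rr m - 1 + 2 * ε) < jj (rr m + 1 - 2 * ε)) ∧
    (SRight ii jj (rr m - 2) (rr m) → jj (rr m + 1 - 2 * ε) < jj (rr m - 1 + 2 * ε))) ∨
  (jj (rr m - 1) = jj (rr m + 1) ∧
    (SLeft ii jj (rr m - 2) (rr m) → ii (rr m - 1 + 2 * ε) < ii (rr m + 1 - 2 * ε)) ∧
    (SRight ii jj (rr m - 2) (rr m) → ii (rr m + 1 - 2 * ε) < ii (rr m - 1 + 2 * ε)))

/-- `p` is an admissible cut point for the prime decomposition. -/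
def CutAt (n r k : ℕ) (rr : ℕ → ℕ) (ii jj : ℕ → ℤ) (p : ℕ) : Prop :=
  p = r ∨
  ¬ ConnPair n (ii p) (jj p) (ii (p + 1)) (jj (p + 1)) ∨
  ∃ m ε, 1 ≤ m ∧ m < k ∧ ε ≤ 1 ∧ p = rr m - ε ∧ BoundaryCond k rr ii jj m ε

/-- `0 = c 0 < c 1 < ⋯ < c L = r` are the cut points of a prime decomposition
of the snake, the prime factors being the segments `𝐬(c t, c (t+1))`. -/
def IsPrimeDecomp (n r k : ℕ) (rr : ℕ → ℕ) (ii jj : ℕ → ℤ) (c : ℕ → ℕ) (L : ℕ) : Prop :=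
  1 ≤ L ∧ c 0 = 0 ∧ c L = r ∧ (∀ t, t < L → c t < c (t + 1)) ∧
  (∀ t, t < L → SegPrime n k rr ii jj (c t) (c (t + 1))) ∧
  (∀ t, 1 ≤ t → t ≤ L → CutAt n r k rr ii jj (c t))

/-- The segment `𝐬(a,b)` is contained in a prime factor of `𝐬`. -/
def ContainedInPF (n r k : ℕ) (rr : ℕ → ℕ) (ii jj : ℕ → ℤ) (a b : ℕ) : Prop :=
  ∃ c L t, IsPrimeDecomp n r k rr ii jj c L ∧ t < L ∧ c t ≤ a ∧ b ≤ c (t + 1)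

/-! Up to exchanging the two connected intervals, `i₂ < i₃ ≤ j₂ < j₃`, so `[i₂,j₃]` is their
union and `[i₃,j₂]` their intersection. An interval overlapping the intersection also overlaps
the one of the two intervals that extends it on the side away from the overlap; an interval
overlapping the union overlaps the one of the two intervals containing its endpoint that lies
inside the union. -/

section

variable {i j a b c d : ℤ}

theorem not_overlap_inter (hac : a < c) (hbd : b < d)
    (hab : ¬ Overlap i j a b) (hcd : ¬ Overlap i j c d) : ¬ Overlap i j c b := by
  rintro (⟨hic, hcj, hjb⟩ | ⟨hci, hib, hbj⟩)
  · exact hcd (Or.inl ⟨hic, hcj, hjb.trans hbd⟩)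
  · exact hab (Or.inr ⟨hac.trans hci, hib, hbj⟩)

theorem not_overlap_union (hac : a < c) (hcb : c ≤ b) (hbd : b < d)
    (hab : ¬ Overlap i j a b) (hcd : ¬ Overlap i j c d) : ¬ Overlap i j a d := by
  rintro (⟨hia, haj, hjd⟩ | ⟨hai, hid, hdj⟩)
  · rcases lt_or_ge j b with hjb | hbj
    · exact hab (Or.inl ⟨hia, haj, hjb⟩)
    · exact hcd (Or.inl ⟨hia.trans hac, hcb.trans hbj, hjd⟩)
  · rcases lt_or_ge c i with hci | hic
    · exact hcd (Or.inr ⟨hci, hid, hdj⟩)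
    · exact hab (Or.inr ⟨hai, hic.trans hcb, hbd.trans hdj⟩)

end

theorem stmt_0_general (n : ℕ) (i1 j1 i2 j2 i3 j3 : ℤ)
    (hconn : ConnPair n i2 j2 i3 j3)
    (h12 : ¬ Overlap i1 j1 i2 j2) (h13 : ¬ Overlap i1 j1 i3 j3) :
    ¬ Overlap i1 j1 i2 j3 ∧ ¬ Overlap i1 j1 i3 j2 := by
  rcases hconn.1 with ⟨hi, hij, hj⟩ | ⟨hi, hij, hj⟩
  · exact ⟨not_overlap_union hi hij hj h12 h13, not_overlap_inter hi hj h12 h13⟩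
  · exact ⟨not_overlap_inter hi hj h13 h12, not_overlap_union hi hij hj h13 h12⟩

/-- Lemma 2.2 (tauprops): if `([i2,j2],[i3,j3])` is connected and `[i1,j1]` overlaps
neither `[i2,j2]` nor `[i3,j3]`, then `[i1,j1]` overlaps neither `[i2,j3]` nor `[i3,j2]`. -/
theorem stmt_0 (n : ℕ) (hn : 1 ≤ n) (i1 j1 i2 j2 i3 j3 : ℤ)
    (h1 : InIn n i1 j1) (h2 : InIn n i2 j2) (h3 : InIn n i3 j3)
    (hconn : ConnPair n i2 j2 i3 j3)
    (h12 : ¬ Overlap i1 j1 i2 j2) (h13 : ¬ Overlap i1 j1 i3 j3) :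
    ¬ Overlap i1 j1 i2 j3 ∧ ¬ Overlap i1 j1 i3 j2 :=
  stmt_0_general n i1 j1 i2 j2 i3 j3 hconn h12 h13

end AltSnakePaper
end

section
/- Let (𝐬, r(𝐬)) ∈ 𝒮 with 𝐬 = ([i_1,j_1],…,[i_r,j_r]) and r(𝐬) = (1, r_1, …, r_k). (a) Let 1 ≤ p < p′ ≤ r and let 0 ≤ m < ℓ ≤ k be such that r_m ≤ p < r_{m+1} and r_{ℓ−1} < p′ ≤ r_ℓ. Then 𝐬(p,p′), together with the r-vector given by the strictly increasing sequence with entries 1, r_{m+1}−p, …, r_{ℓ−1}−p, p′−p (entries equal to an adjacent one being omitted), is an alternating snake; similarly for p = 0, the prefix 𝐬(0,p′) with r-vector (1, r_1, …, r_{ℓ−1}, p′) is an alternating snake. (b) 𝐬 is connected (respectively prime, stable) if and only if 𝐬(p,p′) is connected (respectively prime, stable) for all 0 ≤ p < p′ ≤ r. -/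
/-!
The window `(p, p']` of a snake meets the runs `m + 1, …, ℓ` of the snake. Cutting these runs at
the ends of the window gives the runs of the window, each a sub-run of a run of the snake; a
sub-run with at least two entries is monotone in the same direction as the run containing it, so
monotonicity, alternation and non-overlap pass to the window. The one subtlety is the left end:
if the window meets run `m + 1` in a single entry, that entry merges into the next run.
Connectedness, primality and stability are conditions on consecutive pairs and on inner break
points, hence pass to subsegments.
-/

namespace AltSnakePaper

theorem add_le_of_lt_succ {f : ℕ → ℕ} {K : ℕ} (hf : ∀ t < K, f t < f (t + 1)) :
    ∀ {u v : ℕ}, u ≤ v → v ≤ K → f u + (v - u) ≤ f v := by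
  intro u v huv hvK
  induction v with
  | zero => simp [Nat.le_zero.mp huv]
  | succ w ih =>
    rcases Nat.eq_or_lt_of_le huv with rfl | hlt
    · simp
    · have := ih (by omega) (by omega)
      have := hf w (by omega)
      omega

section Runs

variable {ii jj : ℕ → ℤ} {A B A' B' : ℕ}

theorem SRight.mono (h : SRight ii jj A B) (hA : A ≤ A') (hB : B' ≤ B) : SRight ii jj A' B' :=
  fun s h1 h2 => h s (by omega) (by omega)

theorem SLeft.mono (h : SLeft ii jj A B) (hA : A ≤ A') (hB : B' ≤ B) : SLeft ii jj A' B' :=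
  fun s h1 h2 => h s (by omega) (by omega)

theorem SRight.not_sLeft (h : SRight ii jj A B) (hAB : A + 1 < B) : ¬ SLeft ii jj A B := by
  intro h'
  have := h (A + 1) le_rfl (by omega)
  have := h' (A + 1) le_rfl (by omega)
  omega

theorem sRight_iff_of_subrun (hrun : SRight ii jj A B ∨ SLeft ii jj A B)
    (hA : A ≤ A') (hB : B' ≤ B) (hlen : A' + 1 < B') :
    SRight ii jj A' B' ↔ SRight ii jj A B :=
  ⟨fun h => hrun.resolve_right fun h' => h.not_sLeft hlen (h'.mono hA hB),
    fun h => h.mono hA hB⟩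

theorem sLeft_iff_of_subrun (hrun : SRight ii jj A B ∨ SLeft ii jj A B)
    (hA : A ≤ A') (hB : B' ≤ B) (hlen : A' + 1 < B') :
    SLeft ii jj A' B' ↔ SLeft ii jj A B :=
  ⟨fun h => hrun.resolve_left fun h' => (h'.mono hA hB).not_sLeft hlen h,
    fun h => h.mono hA hB⟩

theorem sRight_shift_iff (p : ℕ) :
    SRight (fun s => ii (p + s)) (fun s => jj (p + s)) A B ↔ SRight ii jj (p + A) (p + B) := by
  constructor
  · intro h s hs1 hs2
    obtain ⟨s, rfl⟩ : ∃ t, s = p + t := ⟨s - p, by omega⟩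
    exact h s (by omega) (by omega)
  · intro h s hs1 hs2
    exact h (p + s) (by omega) (by omega)

theorem sLeft_shift_iff (p : ℕ) :
    SLeft (fun s => ii (p + s)) (fun s => jj (p + s)) A B ↔ SLeft ii jj (p + A) (p + B) := by
  constructor
  · intro h s hs1 hs2
    obtain ⟨s, rfl⟩ : ∃ t, s = p + t := ⟨s - p, by omega⟩
    exact h s (by omega) (by omega)
  · intro h s hs1 hs2
    exact h (p + s) (by omega) (by omega)

end Runs

section Restrict

variable {n r k : ℕ} {rr : ℕ → ℕ} {ii jj : ℕ → ℤ}

theorem IsAltSnake.restrict (h : IsAltSnake n r k rr ii jj) {p p' a k' : ℕ} {R : ℕ → ℕ}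
    (hpp' : p < p') (hp'r : p' ≤ r) (hak : a + k' ≤ k)
    (hR0 : R 0 = 1) (hRk : R k' = p' - p) (hR : ∀ t < k', R t < R (t + 1))
    (hrun : ∀ t, 1 ≤ t → t ≤ k' → rr (a + t - 1) ≤ p + R (t - 1) ∧ p + R t ≤ rr (a + t))
    (hbreak : ∀ t, 1 ≤ t → t < k' → p + R t = rr (a + t)) :
    IsAltSnake n (p' - p) k' R (fun s => ii (p + s)) (fun s => jj (p + s)) := by
  have hRge : ∀ t ≤ k', t + 1 ≤ R t := fun t ht => by
    have := add_le_of_lt_succ hR (Nat.zero_le t) ht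
    omega
  have bridge : ∀ t, 1 ≤ t → t ≤ k' →
      (SRight (fun s => ii (p + s)) (fun s => jj (p + s)) (R (t - 1) - 1) (R t) ↔
        SRight ii jj (rr (a + t - 1) - 1) (rr (a + t))) ∧
      (SLeft (fun s => ii (p + s)) (fun s => jj (p + s)) (R (t - 1) - 1) (R t) ↔
        SLeft ii jj (rr (a + t - 1) - 1) (rr (a + t))) := by
    intro t ht1 htk
    obtain ⟨hlo, hhi⟩ := hrun t ht1 htk
    have hstep := hR (t - 1) (by omega)
    rw [Nat.sub_add_cancel ht1] at hstep
    have := hRge (t - 1) (by omega)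
    have hdir := h.mono (a + t) (by omega) (by omega)
    rw [sRight_shift_iff, sLeft_shift_iff]
    exact ⟨sRight_iff_of_subrun hdir (by omega) hhi (by omega),
      sLeft_iff_of_subrun hdir (by omega) hhi (by omega)⟩
  refine ⟨by omega, ?_, fun s hs1 hs2 => h.mem (p + s) (by omega) (by omega),
    fun s q hs1 hs2 hq1 hq2 hne => h.distinct _ _ (by omega) (by omega) (by omega) (by omega)
      (by omega), hR0, hRk, hR, ?_, ?_, ?_⟩
  · have := hRge k' le_rfl
    omega
  · intro t ht1 htk
    exact (h.mono (a + t) (by omega) (by omega)).imp (bridge t ht1 htk).1.2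
      (bridge t ht1 htk).2.2
  · intro t ht1 htk
    have := (bridge (t + 1) (by omega) htk).2
    simp only [Nat.add_sub_cancel, ← Nat.add_assoc] at this
    rw [(bridge t ht1 htk.le).1, this]
    exact h.alt (a + t) (by omega) (by omega)
  · intro t s q ht1 htk hs1 hs2 hq1 hq2
    have := hbreak t ht1 htk
    exact h.nonoverlap (a + t) (p + s) (p + q) (by omega) (by omega) (by omega) (by omega)
      (by omega) (by omega)

/-- `rr (a + t)` in the coordinates of the window `(p, p']`, clamped to its ends. -/
def inducedRVec (rr : ℕ → ℕ) (a p p' t : ℕ) : ℕ := min (max (rr (a + t) - p) 1) (p' - p)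

theorem IsAltSnake.exists_window (h : IsAltSnake n r k rr ii jj) {p p' m ℓ : ℕ}
    (hpp' : p < p') (hp'r : p' ≤ r) (hmℓ : m < ℓ) (hℓk : ℓ ≤ k)
    (hm : rr m ≤ p + 1) (hm1 : p < rr (m + 1)) (hℓ : rr (ℓ - 1) < p') (hℓ1 : p' ≤ rr ℓ) :
    ∃ k' rr', IsAltSnake n (p' - p) k' rr' (fun s => ii (p + s)) (fun s => jj (p + s)) ∧
      (∀ t, t ≤ k' → rr' t = 1 ∨ rr' t = p' - p ∨
        ∃ u, m + 1 ≤ u ∧ u ≤ ℓ - 1 ∧ rr' t = rr u - p) ∧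
      (∀ u, m + 1 ≤ u → u ≤ ℓ - 1 → ∃ t, t ≤ k' ∧ rr' t = rr u - p) := by
  have hle : ∀ {u v}, u ≤ v → v ≤ k → rr u ≤ rr v := fun huv hv => by
    have := add_le_of_lt_succ h.rrmono huv hv
    omega
  -- The first run of the window is the rest of run `m + 1`, unless that is a single entry.
  obtain ⟨a, ha⟩ : ∃ a, (a = m ∧ p + 2 ≤ min (rr (m + 1)) p') ∨
      (a = m + 1 ∧ min (rr (m + 1)) p' = p + 1) := by
    by_cases hc : p + 2 ≤ min (rr (m + 1)) p'
    · exact ⟨m, .inl ⟨rfl, hc⟩⟩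
    · exact ⟨m + 1, .inr ⟨rfl, by omega⟩⟩
  have ham : m ≤ a ∧ a ≤ m + 1 := by omega
  have hmid : ∀ u, m + 1 ≤ u → u ≤ ℓ - 1 → inducedRVec rr a p p' (u - a) = rr u - p := by
    intro u hu1 hu2
    have := hle hu1 (by omega)
    have := hle hu2 (by omega)
    simp only [inducedRVec, Nat.add_sub_cancel' (show a ≤ u by omega)]
    omega
  have hR0 : inducedRVec rr a p p' 0 = 1 := by
    simp only [inducedRVec, Nat.add_zero]
    rcases ha with ⟨rfl, _⟩ | ⟨rfl, _⟩ <;> omega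
  have hRk : inducedRVec rr a p p' (ℓ - a) = p' - p := by
    simp only [inducedRVec, Nat.add_sub_cancel' (show a ≤ ℓ by omega)]
    omega
  have hR : ∀ t < ℓ - a, inducedRVec rr a p p' t < inducedRVec rr a p p' (t + 1) := by
    intro t ht
    have := h.rrmono (a + t) (by omega)
    have := hle (show a + t ≤ ℓ - 1 by omega) (by omega)
    have hlow : (rr (a + t) ≤ p + 1 ∧ p + 2 ≤ min (rr (a + t + 1)) p') ∨
        rr (m + 1) ≤ rr (a + t) := by
      rcases Nat.lt_or_ge (a + t) (m + 1) with hu | hu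
      · obtain ⟨rfl, rfl⟩ : a = m ∧ t = 0 := by omega
        simp only [Nat.add_zero]
        exact .inl ⟨hm, by omega⟩
      · exact .inr (hle hu (by omega))
    have hhigh : p' ≤ rr (a + t + 1) ∨ rr (a + t + 1) ≤ rr (ℓ - 1) := by
      rcases Nat.lt_or_ge (a + t + 1) ℓ with hu | hu
      · exact .inr (hle (by omega) (by omega))
      · exact .inl (by rwa [show a + t + 1 = ℓ by omega])
    simp only [inducedRVec, ← Nat.add_assoc]
    omega
  have hrun : ∀ t, 1 ≤ t → t ≤ ℓ - a → rr (a + t - 1) ≤ p + inducedRVec rr a p p' (t - 1) ∧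
      p + inducedRVec rr a p p' t ≤ rr (a + t) := by
    intro t ht1 ht
    have := hle (show a + t - 1 ≤ ℓ - 1 by omega) (by omega)
    have := hle (show m + 1 ≤ a + t by omega) (by omega)
    simp only [inducedRVec, show a + (t - 1) = a + t - 1 by omega]
    omega
  have hbreak : ∀ t, 1 ≤ t → t < ℓ - a → p + inducedRVec rr a p p' t = rr (a + t) := by
    intro t ht1 ht
    have := hle (show m + 1 ≤ a + t by omega) (by omega)
    have := hmid (a + t) (by omega) (by omega)
    rw [Nat.add_sub_cancel_left] at this
    omega
  refine ⟨ℓ - a, inducedRVec rr a p p',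
    h.restrict hpp' hp'r (by omega) hR0 hRk hR hrun hbreak, ?_, ?_⟩
  · intro t ht
    rcases Nat.eq_zero_or_pos t with rfl | ht0
    · exact .inl hR0
    rcases Nat.eq_or_lt_of_le ht with rfl | htk
    · exact .inr (.inl hRk)
    refine .inr (.inr ⟨a + t, by omega, by omega, ?_⟩)
    simpa using hmid (a + t) (by omega) (by omega)
  · intro u hu1 hu2
    exact ⟨u - a, by omega, hmid u hu1 hu2⟩

end Restrict

section Subsegments

variable {n k : ℕ} {rr : ℕ → ℕ} {ii jj : ℕ → ℤ} {a b a' b' : ℕ}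

theorem forall_subsegment_iff {P : ℕ → ℕ → Prop} {r : ℕ}
    (hP : ∀ {a b a' b'}, a ≤ a' → b' ≤ b → P a b → P a' b') (hr : 0 < r) :
    P 0 r ↔ ∀ p p', p < p' → p' ≤ r → P p p' :=
  ⟨fun h _ _ _ hp' => hP (Nat.zero_le _) hp' h, fun h => h 0 r hr le_rfl⟩

theorem SegConnected.mono (h : SegConnected n ii jj a b) (ha : a ≤ a') (hb : b' ≤ b) :
    SegConnected n ii jj a' b' :=
  fun s h1 h2 => h s (by omega) (by omega)

theorem SegPrime.mono (h : SegPrime n k rr ii jj a b) (ha : a ≤ a') (hb : b' ≤ b) :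
    SegPrime n k rr ii jj a' b' :=
  ⟨h.1.mono ha hb, fun m h1 h2 h3 h4 => h.2 m h1 h2 (by omega) (by omega)⟩

theorem SegStable.mono (h : SegStable k rr ii jj a b) (ha : a ≤ a') (hb : b' ≤ b) :
    SegStable k rr ii jj a' b' :=
  fun m h1 h2 h3 h4 => h m h1 h2 (by omega) (by omega)

end Subsegments

theorem stmt_1_general (n r k : ℕ) (rr : ℕ → ℕ) (ii jj : ℕ → ℤ)
    (h : IsAltSnake n r k rr ii jj) :
    (∀ p p' m ℓ, p < p' → p' ≤ r → m < ℓ → ℓ ≤ k → rr m ≤ p + 1 → p < rr (m + 1) →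
        rr (ℓ - 1) < p' → p' ≤ rr ℓ →
        ∃ k' rr', IsAltSnake n (p' - p) k' rr'
            (fun s => ii (p + s)) (fun s => jj (p + s)) ∧
          (∀ t, t ≤ k' → rr' t = 1 ∨ rr' t = p' - p ∨
              ∃ u, m + 1 ≤ u ∧ u ≤ ℓ - 1 ∧ rr' t = rr u - p) ∧
          (∀ u, m + 1 ≤ u → u ≤ ℓ - 1 → ∃ t, t ≤ k' ∧ rr' t = rr u - p)) ∧
    (SegConnected n ii jj 0 r ↔
      ∀ p p', p < p' → p' ≤ r → SegConnected n ii jj p p') ∧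
    (SegPrime n k rr ii jj 0 r ↔
      ∀ p p', p < p' → p' ≤ r → SegPrime n k rr ii jj p p') ∧
    (SegStable k rr ii jj 0 r ↔
      ∀ p p', p < p' → p' ≤ r → SegStable k rr ii jj p p') :=
  ⟨fun _ _ _ _ => h.exists_window,
    forall_subsegment_iff (fun ha hb hs => hs.mono ha hb) h.hr,
    forall_subsegment_iff (fun ha hb hs => hs.mono ha hb) h.hr,
    forall_subsegment_iff (fun ha hb hs => hs.mono ha hb) h.hr⟩

/-- Lemma (elemalt (i)): substrings of alternating snakes, with their induced r-vectors,
are alternating snakes; and `𝐬` is connected (resp. prime, stable) iff all its substrings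
are connected (resp. prime, stable). -/
theorem stmt_1 (n r k : ℕ) (hn : 1 ≤ n) (rr : ℕ → ℕ) (ii jj : ℕ → ℤ)
    (h : IsAltSnake n r k rr ii jj) :
    (∀ p p' m ℓ, p < p' → p' ≤ r → m < ℓ → ℓ ≤ k → rr m ≤ p + 1 → p < rr (m + 1) →
        rr (ℓ - 1) < p' → p' ≤ rr ℓ →
        ∃ k' rr', IsAltSnake n (p' - p) k' rr'
            (fun s => ii (p + s)) (fun s => jj (p + s)) ∧
          (∀ t, t ≤ k' → rr' t = 1 ∨ rr' t = p' - p ∨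
              ∃ u, m + 1 ≤ u ∧ u ≤ ℓ - 1 ∧ rr' t = rr u - p) ∧
          (∀ u, m + 1 ≤ u → u ≤ ℓ - 1 → ∃ t, t ≤ k' ∧ rr' t = rr u - p)) ∧
    (SegConnected n ii jj 0 r ↔
      ∀ p p', p < p' → p' ≤ r → SegConnected n ii jj p p') ∧
    (SegPrime n k rr ii jj 0 r ↔
      ∀ p p', p < p' → p' ≤ r → SegPrime n k rr ii jj p p') ∧
    (SegStable k rr ii jj 0 r ↔
      ∀ p p', p < p' → p' ≤ r → SegStable k rr ii jj p p') :=
  stmt_1_general n r k rr ii jj h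

end AltSnakePaper
end

section
/- Let γ ∈ 𝒬_n^+ with γ ≠ 1. Write γ uniquely as γ = ∏ ω_{i,j}^{c_{i,j}}, with finitely many nonzero integer exponents c_{i,j} over pairs with 0 < j−i < n+1, and write γ = α_{p_1,ℓ_1} ⋯ α_{p_s,ℓ_s} as a product of the free generators of 𝒬_n^+. Then: whenever c_{i,j} > 0 there exists 1 ≤ k ≤ s with [i,j] ∈ {[p_k,ℓ_k], [p_k+1, ℓ_k+1]}, and whenever c_{i,j} < 0 there exists 1 ≤ k ≤ s with [i,j] ∈ {[p_k+1,ℓ_k], [p_k, ℓ_k+1]}. In particular, if ω ∈ ℐ_n^+ satisfies ωγ^{−1} ∈ ℐ_n^+, then there exists 1 ≤ k ≤ s such that ω ω_{p_k,ℓ_k}^{−1} ∈ ℐ_n^+ or ω ω_{p_k+1,ℓ_k+1}^{−1} ∈ ℐ_n^+. -/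
namespace AltSnakePaper

/-- The (multiplicative) free abelian group containing `ℐₙ`. -/
abbrev IGrp : Type := Multiplicative ((ℤ × ℤ) →₀ ℤ)

/-- The generator `ω_{i,j}` of `ℐₙ⁺`, with the convention `ω_{i,i} = ω_{i,i+n+1} = 1`. -/
noncomputable def omg (n : ℕ) (i j : ℤ) : IGrp :=
  if 0 < j - i ∧ j - i < (n : ℤ) + 1 then Multiplicative.ofAdd (Finsupp.single (i, j) 1) else 1

/-- The element `α_{i,j} = ω_{i,j} ω_{i+1,j+1} (ω_{i+1,j} ω_{i,j+1})⁻¹`. -/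
noncomputable def alph (n : ℕ) (i j : ℤ) : IGrp :=
  omg n i j * omg n (i + 1) (j + 1) * (omg n (i + 1) j * omg n i (j + 1))⁻¹

/-- The monoid `ℐₙ⁺` generated by the `ω_{i,j}`. -/
noncomputable def Iplus (n : ℕ) : Submonoid IGrp :=
  Submonoid.closure {g : IGrp | ∃ i j : ℤ, g = omg n i j}

-- AUX START
open Finsupp in
lemma toAdd_omg (n : ℕ) (i j : ℤ) :
    Multiplicative.toAdd (omg n i j) =
      if 0 < j - i ∧ j - i < (n : ℤ) + 1 then Finsupp.single ((i : ℤ), j) (1:ℤ) else 0 := by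
  unfold omg; split <;> rfl

lemma omg_apply_nonneg (n : ℕ) (i j : ℤ) (x : ℤ × ℤ) :
    0 ≤ Multiplicative.toAdd (omg n i j) x := by
  rw [toAdd_omg]
  split
  · rw [Finsupp.single_apply]; split <;> norm_num
  · simp

lemma omg_apply_of_ne (n : ℕ) (i j : ℤ) (x : ℤ × ℤ) (h : x ≠ (i, j)) :
    Multiplicative.toAdd (omg n i j) x = 0 := by
  rw [toAdd_omg]
  split
  · exact Finsupp.single_eq_of_ne' fun he => h he.symm
  · simp

lemma toAdd_alph_apply (n : ℕ) (i j : ℤ) (x : ℤ × ℤ) :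
    Multiplicative.toAdd (alph n i j) x =
      Multiplicative.toAdd (omg n i j) x + Multiplicative.toAdd (omg n (i+1) (j+1)) x
        - Multiplicative.toAdd (omg n (i+1) j) x - Multiplicative.toAdd (omg n i (j+1)) x := by
  simp only [alph, toAdd_mul, toAdd_inv, Finsupp.add_apply, Finsupp.neg_apply]
  ring

lemma alph_apply_nonpos (n : ℕ) (i j : ℤ) (x : ℤ × ℤ) (h1 : x ≠ (i, j))
    (h2 : x ≠ (i + 1, j + 1)) : Multiplicative.toAdd (alph n i j) x ≤ 0 := by
  rw [toAdd_alph_apply, omg_apply_of_ne n i j x h1, omg_apply_of_ne n (i+1) (j+1) x h2]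
  have := omg_apply_nonneg n (i+1) j x
  have := omg_apply_nonneg n i (j+1) x
  omega

lemma alph_apply_nonneg (n : ℕ) (i j : ℤ) (x : ℤ × ℤ) (h1 : x ≠ (i + 1, j))
    (h2 : x ≠ (i, j + 1)) : 0 ≤ Multiplicative.toAdd (alph n i j) x := by
  rw [toAdd_alph_apply, omg_apply_of_ne n (i+1) j x h1, omg_apply_of_ne n i (j+1) x h2]
  have := omg_apply_nonneg n i j x
  have := omg_apply_nonneg n (i+1) (j+1) x
  omega

/-- Sum-of-coefficients homomorphism. -/
noncomputable def Tsum : ((ℤ × ℤ) →₀ ℤ) →+ ℤ := Finsupp.liftAddHom fun _ => AddMonoidHom.id ℤ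

lemma Tsum_single (a : ℤ × ℤ) (b : ℤ) : Tsum (Finsupp.single a b) = b := by
  simp [Tsum]

lemma Tsum_omg_nonneg (n : ℕ) (i j : ℤ) : 0 ≤ Tsum (Multiplicative.toAdd (omg n i j)) := by
  rw [toAdd_omg]; split <;> simp [Tsum_single]

lemma Tsum_omg_le_one (n : ℕ) (i j : ℤ) : Tsum (Multiplicative.toAdd (omg n i j)) ≤ 1 := by
  rw [toAdd_omg]; split <;> simp [Tsum_single]

lemma Tsum_alph_nonneg (n : ℕ) (i j : ℤ) (h : 0 < j - i ∧ j - i < (n : ℤ) + 1) :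
    0 ≤ Tsum (Multiplicative.toAdd (alph n i j)) := by
  have heq : Multiplicative.toAdd (alph n i j) =
      Multiplicative.toAdd (omg n i j) + Multiplicative.toAdd (omg n (i+1) (j+1))
        - Multiplicative.toAdd (omg n (i+1) j) - Multiplicative.toAdd (omg n i (j+1)) := by
    simp only [alph, toAdd_mul, toAdd_inv]; abel
  have h2 : 0 < (j+1) - (i+1) ∧ (j+1) - (i+1) < (n : ℤ) + 1 := by omega
  have hA : Tsum (Multiplicative.toAdd (omg n i j)) = 1 := by
    rw [toAdd_omg, if_pos h, Tsum_single]
  have hB : Tsum (Multiplicative.toAdd (omg n (i+1) (j+1))) = 1 := by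
    rw [toAdd_omg, if_pos h2, Tsum_single]
  rw [heq, map_sub, map_sub, map_add, hA, hB]
  have := Tsum_omg_le_one n (i+1) j
  have := Tsum_omg_le_one n i (j+1)
  omega

lemma of_mem_Iplus {n : ℕ} {ω : IGrp} (h : ω ∈ Iplus n) (x : ℤ × ℤ) :
    0 ≤ Multiplicative.toAdd ω x ∧
      (Multiplicative.toAdd ω x ≠ 0 → 0 < x.2 - x.1 ∧ x.2 - x.1 < (n : ℤ) + 1) := by
  induction h using Submonoid.closure_induction with
  | mem g hg =>
    obtain ⟨i, j, rfl⟩ := hg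
    rw [toAdd_omg]
    split
    · next hc =>
      rw [Finsupp.single_apply]
      split
      · next he => exact ⟨by norm_num, fun _ => by rw [← he]; exact hc⟩
      · exact ⟨le_refl 0, fun h0 => absurd rfl h0⟩
    · exact ⟨le_refl 0, fun h0 => absurd rfl h0⟩
  | one => exact ⟨le_refl 0, fun h0 => absurd rfl h0⟩
  | mul a b ha hb iha ihb =>
    rw [toAdd_mul, Finsupp.add_apply]
    constructor
    · exact add_nonneg iha.1 ihb.1
    · intro h0
      rcases eq_or_ne (Multiplicative.toAdd a x) 0 with h1 | h1
      · exact ihb.2 (by omega)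
      · exact iha.2 h1

lemma mem_Iplus_of (n : ℕ) (f : (ℤ × ℤ) →₀ ℤ) :
    (∀ x, 0 ≤ f x) → (∀ x : ℤ × ℤ, f x ≠ 0 → 0 < x.2 - x.1 ∧ x.2 - x.1 < (n : ℤ) + 1) →
    Multiplicative.ofAdd f ∈ Iplus n := by
  induction f using Finsupp.induction with
  | zero => intro _ _; rw [ofAdd_zero]; exact one_mem _
  | single_add a b f haf hb ih =>
    intro h0 hs
    have hfa : f a = 0 := Finsupp.notMem_support_iff.mp haf
    have hab : (Finsupp.single a b + f) a = b := by
      rw [Finsupp.add_apply, Finsupp.single_eq_same, hfa, add_zero]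
    have hbpos : 0 < b := by have := h0 a; rw [hab] at this; omega
    have hcond : 0 < a.2 - a.1 ∧ a.2 - a.1 < (n : ℤ) + 1 := by
      apply hs a; rw [hab]; omega
    have hval : ∀ x, x ≠ a → (Finsupp.single a b + f) x = f x := by
      intro x hx
      rw [Finsupp.add_apply, Finsupp.single_eq_of_ne' (Ne.symm hx), zero_add]
    rw [ofAdd_add]
    apply mul_mem
    · have hsingle : Finsupp.single a b = b.toNat • Finsupp.single a (1 : ℤ) := by
        rw [Finsupp.smul_single, nsmul_eq_mul, mul_one, Int.toNat_of_nonneg hbpos.le]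
      have homg : Multiplicative.ofAdd (Finsupp.single a (1 : ℤ)) = omg n a.1 a.2 := by
        rw [omg, if_pos hcond]
      rw [hsingle, ofAdd_nsmul, homg]
      exact pow_mem (Submonoid.subset_closure (Set.mem_setOf.mpr ⟨a.1, a.2, rfl⟩)) _
    · apply ih
      · intro x
        rcases eq_or_ne x a with rfl | hx
        · rw [hfa]
        · rw [← hval x hx]; exact h0 x
      · intro x hfx
        rcases eq_or_ne x a with rfl | hx
        · exact absurd hfa hfx
        · exact hs x (by rwa [hval x hx])
-- AUX END

/-- Lemma (gammcomp): if `γ = α_{p_1,ℓ_1} ⋯ α_{p_s,ℓ_s} ∈ 𝒬ₙ⁺ \ {1}`, then every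
generator `ω_{i,j}` occurring with positive (resp. negative) exponent in `γ` satisfies
`[i,j] ∈ {[p_t,ℓ_t],[p_t+1,ℓ_t+1]}` (resp. `[i,j] ∈ {[p_t+1,ℓ_t],[p_t,ℓ_t+1]}`) for some
`t`; and if `ω ∈ ℐₙ⁺` satisfies `ω γ⁻¹ ∈ ℐₙ⁺` then `ω ω_{p_t,ℓ_t}⁻¹ ∈ ℐₙ⁺` or
`ω ω_{p_t+1,ℓ_t+1}⁻¹ ∈ ℐₙ⁺` for some `t`. -/
theorem stmt_5 (n : ℕ) (hn : 1 ≤ n) (γ : IGrp) (s : ℕ) (hs : 1 ≤ s) (p ℓ : ℕ → ℤ)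
    (hval : ∀ t, 1 ≤ t → t ≤ s → 0 < ℓ t - p t ∧ ℓ t - p t < (n : ℤ) + 1)
    (hγ : γ = ∏ t ∈ Finset.Icc 1 s, alph n (p t) (ℓ t)) (hne : γ ≠ 1) :
    (∀ i j : ℤ, 0 < Multiplicative.toAdd γ (i, j) →
      ∃ t, 1 ≤ t ∧ t ≤ s ∧ ((i, j) = (p t, ℓ t) ∨ (i, j) = (p t + 1, ℓ t + 1))) ∧
    (∀ i j : ℤ, Multiplicative.toAdd γ (i, j) < 0 →
      ∃ t, 1 ≤ t ∧ t ≤ s ∧ ((i, j) = (p t + 1, ℓ t) ∨ (i, j) = (p t, ℓ t + 1))) ∧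
    (∀ ω : IGrp, ω ∈ Iplus n → ω * γ⁻¹ ∈ Iplus n →
      ∃ t, 1 ≤ t ∧ t ≤ s ∧
        (ω * (omg n (p t) (ℓ t))⁻¹ ∈ Iplus n ∨
          ω * (omg n (p t + 1) (ℓ t + 1))⁻¹ ∈ Iplus n)) := by
  have key_pos : ∀ i j : ℤ, 0 < Multiplicative.toAdd γ (i, j) →
      ∃ t, 1 ≤ t ∧ t ≤ s ∧ ((i, j) = (p t, ℓ t) ∨ (i, j) = (p t + 1, ℓ t + 1)) := by
    intro i j hpos
    by_contra hcon
    push_neg at hcon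
    have hle : Multiplicative.toAdd γ (i, j) ≤ 0 := by
      rw [hγ, toAdd_prod, Finsupp.finset_sum_apply]
      apply Finset.sum_nonpos
      intro t ht
      rw [Finset.mem_Icc] at ht
      have h := hcon t ht.1 ht.2
      exact alph_apply_nonpos n (p t) (ℓ t) (i, j) h.1 h.2
    omega
  have key_neg : ∀ i j : ℤ, Multiplicative.toAdd γ (i, j) < 0 →
      ∃ t, 1 ≤ t ∧ t ≤ s ∧ ((i, j) = (p t + 1, ℓ t) ∨ (i, j) = (p t, ℓ t + 1)) := by
    intro i j hneg
    by_contra hcon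
    push_neg at hcon
    have hle : 0 ≤ Multiplicative.toAdd γ (i, j) := by
      rw [hγ, toAdd_prod, Finsupp.finset_sum_apply]
      apply Finset.sum_nonneg
      intro t ht
      rw [Finset.mem_Icc] at ht
      have h := hcon t ht.1 ht.2
      exact alph_apply_nonneg n (p t) (ℓ t) (i, j) h.1 h.2
    omega
  refine ⟨key_pos, key_neg, ?_⟩
  intro ω hω hωγ
  -- γ has a positive coefficient somewhere
  have hTγ : 0 ≤ Tsum (Multiplicative.toAdd γ) := by
    rw [hγ, toAdd_prod, map_sum]
    apply Finset.sum_nonneg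
    intro t ht
    rw [Finset.mem_Icc] at ht
    exact Tsum_alph_nonneg n (p t) (ℓ t) (hval t ht.1 ht.2)
  have hex : ∃ x : ℤ × ℤ, 0 < Multiplicative.toAdd γ x := by
    by_contra hcon
    push_neg at hcon
    have hne0 : Multiplicative.toAdd γ ≠ 0 := by
      intro h0
      exact hne (by rw [← ofAdd_toAdd γ, h0, ofAdd_zero])
    have hsupp : (Multiplicative.toAdd γ).support.Nonempty :=
      Finsupp.support_nonempty_iff.mpr hne0
    have hlt : Tsum (Multiplicative.toAdd γ) < 0 := by
      have hT : Tsum (Multiplicative.toAdd γ) =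
          ∑ x ∈ (Multiplicative.toAdd γ).support, Multiplicative.toAdd γ x := by
        simp [Tsum, Finsupp.liftAddHom_apply, Finsupp.sum]
      rw [hT]
      apply Finset.sum_neg _ hsupp
      intro x hx
      have := Finsupp.mem_support_iff.mp hx
      have := hcon x
      omega
    omega
  obtain ⟨⟨x1, x2⟩, hx⟩ := hex
  obtain ⟨t, ht1, hts, hxt⟩ := key_pos x1 x2 hx
  have hω' := fun y => of_mem_Iplus hω y
  have hγω := fun y => of_mem_Iplus hωγ y
  have hgeγ : ∀ y, Multiplicative.toAdd γ y ≤ Multiplicative.toAdd ω y := by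
    intro y
    have h1 := (hγω y).1
    rw [toAdd_mul, toAdd_inv, Finsupp.add_apply, Finsupp.neg_apply] at h1
    omega
  have main : ∀ a : ℤ × ℤ, 0 < a.2 - a.1 ∧ a.2 - a.1 < (n : ℤ) + 1 →
      1 ≤ Multiplicative.toAdd ω a → ω * (omg n a.1 a.2)⁻¹ ∈ Iplus n := by
    intro a ha hωa
    have heq : ω * (omg n a.1 a.2)⁻¹ =
        Multiplicative.ofAdd (Multiplicative.toAdd ω - Finsupp.single a 1) := by
      apply Multiplicative.toAdd.injective
      rw [toAdd_mul, toAdd_inv, toAdd_omg, if_pos ha, toAdd_ofAdd, Prod.mk.eta,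
        sub_eq_add_neg]
    rw [heq]
    apply mem_Iplus_of
    · intro x
      rw [Finsupp.sub_apply, Finsupp.single_apply]
      rcases eq_or_ne a x with rfl | hax
      · rw [if_pos rfl]; omega
      · rw [if_neg hax, sub_zero]; exact (hω' x).1
    · intro x hfx
      rw [Finsupp.sub_apply, Finsupp.single_apply] at hfx
      rcases eq_or_ne a x with rfl | hax
      · exact ha
      · rw [if_neg hax, sub_zero] at hfx
        exact (hω' x).2 hfx
  rcases hxt with h | h
  · refine ⟨t, ht1, hts, Or.inl ?_⟩
    have hx' : 0 < Multiplicative.toAdd γ (p t, ℓ t) := by rwa [h] at hx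
    exact main (p t, ℓ t) (by simpa using hval t ht1 hts)
      (by have := hgeγ (p t, ℓ t); omega)
  · refine ⟨t, ht1, hts, Or.inr ?_⟩
    have hx' : 0 < Multiplicative.toAdd γ (p t + 1, ℓ t + 1) := by rwa [h] at hx
    refine main (p t + 1, ℓ t + 1) ?_ (by have := hgeγ (p t + 1, ℓ t + 1); omega)
    have := hval t ht1 hts
    constructor <;> [skip; skip] <;> simp only [] <;> omega

end AltSnakePaper
end

section
/- Let (𝐬, r(𝐬)) ∈ 𝒮 with 𝐬 = ([i_1,j_1],…,[i_r,j_r]) and r(𝐬) = (1, r_1, …, r_k). Let 1 ≤ p ≤ r−1 with r_m ≤ p < r_{m+1} for some 0 ≤ m ≤ k−1, suppose 𝐬(p−1,p+1) is contained in a prime factor of 𝐬, and let ε ∈ {0,1} be such that i_{p+ε} < i_{p+1−ε} ≤ j_{p+ε} < j_{p+1−ε}. Then: (a) if 1 ≤ s ≤ r satisfies i_{p+ε} ≤ i_s < i_{p+1−ε} ≤ j_{p+ε} ≤ j_s < j_{p+1−ε}, then s = p+ε; (b) if 1 ≤ s ≤ r satisfies i_{p+ε} < i_s ≤ i_{p+1−ε}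 ≤ j_{p+ε} < j_s ≤ j_{p+1−ε}, then s = p+1−ε. -/
/-
Reflecting every interval, `[i, j] ↦ [-j, -i]`, preserves all the notions involved and exchanges
`ε = 0` with `ε = 1`, so we may assume `i_p < i_{p+1}`; the run of the snake through `p` and `p + 1`
is then increasing. An interval squeezed between `[i_p, j_p]` and `[i_{p+1}, j_{p+1}]` as in (a)
or (b) overlaps one of them, so by (alt2) it lies in that run, where monotonicity pins it down, or
just across a break point `b` at its end (for (a)) or start (for (b)). In the latter case
`i_{b-1} ≤ i_{b+1}` and `j_{b-1} ≤ j_{b+1}`, and (alt2) at `b` forces one of these to be an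
equality. Then `b` cannot lie inside a prime factor, so the factor containing `𝐬(p-1, p+1)` is cut
next to `b`. Such a cut is either excluded by the inequalities, or it comes from a second break
adjacent to `b`, and then the boundary condition there makes the two intervals flanking this pair
of breaks overlap, against (alt2).
-/

namespace AltSnakePaper

section

variable {n r k : ℕ} {rr : ℕ → ℕ} {ii jj : ℕ → ℤ}

section Runs

variable {a b : ℕ}

lemma SRight.strictMonoOn_ii (H : SRight ii jj a b) : StrictMonoOn ii (Set.Icc (a + 1) b) :=
  strictMonoOn_of_lt_add_one Set.ordConnected_Icc fun s _ hs hs' => (H s hs.1 hs'.2).1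

lemma SLeft.strictAntiOn_ii (H : SLeft ii jj a b) : StrictAntiOn ii (Set.Icc (a + 1) b) :=
  strictAntiOn_of_add_one_lt Set.ordConnected_Icc fun s _ hs hs' => (H s hs.1 hs'.2).1

lemma SLeft.strictAntiOn_jj (H : SLeft ii jj a b) : StrictAntiOn jj (Set.Icc (a + 1) b) :=
  strictAntiOn_of_add_one_lt Set.ordConnected_Icc fun s _ hs hs' => (H s hs.1 hs'.2).2

lemma sright_pair {p : ℕ} (H : ii p < ii (p + 1) ∧ jj p < jj (p + 1)) :
    SRight ii jj (p - 1) (p + 1) := by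
  intro s hs hs'
  obtain rfl : s = p := by omega
  exact H

lemma sleft_pair {p : ℕ} (H : ii (p + 1) < ii p ∧ jj (p + 1) < jj p) :
    SLeft ii jj (p - 1) (p + 1) := by
  intro s hs hs'
  obtain rfl : s = p := by omega
  exact H

end Runs

lemma BoundaryCond.lt_of_sright {m p : ℕ} (hbc : BoundaryCond k rr ii jj m 0) (hq : rr m = p + 1)
    (hinc : ii p < ii (p + 1) ∧ jj p < jj (p + 1)) :
    (ii p = ii (p + 2) ∧ jj (p + 2) < jj p) ∨ (jj p = jj (p + 2) ∧ ii (p + 2) < ii p) := by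
  have hR : SRight ii jj (rr m - 2) (rr m) := by
    rw [hq, show p + 1 - 2 = p - 1 by omega]; exact sright_pair hinc
  simp only [BoundaryCond, hq, Nat.add_sub_cancel, mul_zero, add_zero, Nat.sub_zero] at hbc hR
  rcases hbc with ⟨hi, -, hj⟩ | ⟨hj, -, hi⟩
  · exact Or.inl ⟨hi, hj hR⟩
  · exact Or.inr ⟨hj, hi hR⟩

lemma BoundaryCond.lt_of_sleft {m p : ℕ} (hbc : BoundaryCond k rr ii jj m 1) (hq : rr m = p + 1)
    (hdec : ii (p + 1) < ii p ∧ jj (p + 1) < jj p) :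
    (ii p = ii (p + 2) ∧ jj (p + 2) < jj p) ∨ (jj p = jj (p + 2) ∧ ii (p + 2) < ii p) := by
  have hL : SLeft ii jj (rr m - 2) (rr m) := by
    rw [hq, show p + 1 - 2 = p - 1 by omega]; exact sleft_pair hdec
  simp only [BoundaryCond, hq, Nat.add_sub_cancel, mul_one] at hbc hL
  rcases hbc with ⟨hi, hj, -⟩ | ⟨hj, hi, -⟩
  · exact Or.inl ⟨hi, hj hL⟩
  · exact Or.inr ⟨hj, hi hL⟩

namespace IsAltSnake

lemma rr_strictMonoOn (h : IsAltSnake n r k rr ii jj) : StrictMonoOn rr (Set.Iic k) :=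
  strictMonoOn_of_lt_add_one Set.ordConnected_Iic fun m _ _ hm => h.rrmono m hm

lemma one_lt_rr (h : IsAltSnake n r k rr ii jj) {m : ℕ} (hm : 1 ≤ m) (hmk : m ≤ k) :
    1 < rr m :=
  h.rr0 ▸ h.rr_strictMonoOn (Nat.zero_le k) hmk (by omega)

lemma one_le_rr (h : IsAltSnake n r k rr ii jj) {m : ℕ} (hmk : m ≤ k) : 1 ≤ rr m :=
  h.rr0 ▸ h.rr_strictMonoOn.monotoneOn (Nat.zero_le k) hmk (Nat.zero_le m)

lemma rr_le (h : IsAltSnake n r k rr ii jj) {m : ℕ} (hmk : m ≤ k) : rr m ≤ r :=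
  h.rrk ▸ h.rr_strictMonoOn.monotoneOn hmk (Set.mem_Iic.mpr le_rfl) hmk

lemma rr_lt_rr_iff (h : IsAltSnake n r k rr ii jj) {a b : ℕ} (ha : a ≤ k) (hb : b ≤ k) :
    rr a < rr b ↔ a < b :=
  h.rr_strictMonoOn.lt_iff_lt ha hb

lemma lt_of_rr_lt (h : IsAltSnake n r k rr ii jj) {m s : ℕ} (hmk : m ≤ k) (hs : rr m < s)
    (hsr : s ≤ r) : m < k := by
  rcases hmk.lt_or_eq with hmk | rfl
  · exact hmk
  · have := h.rrk; omega

lemma not_sright_and_sleft (h : IsAltSnake n r k rr ii jj) {m : ℕ} (hmk : m + 1 ≤ k) :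
    ¬ (SRight ii jj (rr m - 1) (rr (m + 1)) ∧ SLeft ii jj (rr m - 1) (rr (m + 1))) := by
  rintro ⟨hR, hL⟩
  have h1 := h.one_le_rr (m := m) (by omega)
  have h2 := h.rrmono m (by omega)
  have := hR (rr m) (by omega) (by omega)
  have := hL (rr m) (by omega) (by omega)
  omega

lemma sright_of_lt (h : IsAltSnake n r k rr ii jj) {m p : ℕ} (hmk : m + 1 ≤ k)
    (hp : rr m ≤ p) (hp' : p < rr (m + 1)) (hlt : ii p < ii (p + 1)) :
    SRight ii jj (rr m - 1) (rr (m + 1)) := by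
  have hrun := h.mono (m + 1) (by omega) hmk
  rw [Nat.add_sub_cancel] at hrun
  refine hrun.resolve_right fun hL => ?_
  have := h.one_le_rr (m := m) (by omega)
  have := hL p (by omega) (by omega)
  omega

lemma sleft_succ_iff (h : IsAltSnake n r k rr ii jj) {m q : ℕ} (hmk : m + 2 ≤ k)
    (hq : rr (m + 1) = q + 1) :
    SLeft ii jj q (rr (m + 2)) ↔ SRight ii jj (rr m - 1) (q + 1) := by
  simpa [hq] using (h.alt (m + 1) (by omega) (by omega)).symm

lemma sright_succ_iff (h : IsAltSnake n r k rr ii jj) {m q : ℕ} (hmk : m + 2 ≤ k)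
    (hq : rr (m + 1) = q + 1) :
    SRight ii jj q (rr (m + 2)) ↔ SLeft ii jj (rr m - 1) (q + 1) := by
  have hrun₁ := h.mono (m + 1) (by omega) (by omega)
  have hrun₂ := h.mono (m + 2) (by omega) hmk
  simp only [Nat.add_sub_cancel, show m + 2 - 1 = m + 1 by omega, hq] at hrun₁ hrun₂
  constructor
  · intro hR
    refine hrun₁.resolve_left fun hR' => ?_
    exact h.not_sright_and_sleft hmk
      ⟨by simpa [hq] using hR, by simpa [hq] using (h.sleft_succ_iff hmk hq).mpr hR'⟩
  · intro hL
    refine hrun₂.resolve_right fun hL' => ?_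
    exact h.not_sright_and_sleft (m := m) (by omega)
      ⟨by simpa [hq] using (h.sleft_succ_iff hmk hq).mp hL', by simpa [hq] using hL⟩

lemma eq_or_eq_of_break (h : IsAltSnake n r k rr ii jj) {μ p : ℕ} (hμ : 1 ≤ μ) (hμk : μ < k)
    (hq : rr μ = p + 1) (hr : p + 2 ≤ r) (hi : ii p ≤ ii (p + 2)) (hj : jj p ≤ jj (p + 2))
    (hmid : ii (p + 2) ≤ jj p) : ii p = ii (p + 2) ∨ jj p = jj (p + 2) := by
  by_contra! hne
  have := h.one_lt_rr hμ hμk.le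
  exact h.nonoverlap μ p (p + 2) hμ hμk (by omega) (by omega) (by omega) hr
    (Or.inl ⟨lt_of_le_of_ne hi hne.1, hmid, lt_of_le_of_ne hj hne.2⟩)

lemma cutAt_succ_of_containedInPF (h : IsAltSnake n r k rr ii jj) {μ p : ℕ}
    (hcont : ContainedInPF n r k rr ii jj (p - 1) (p + 1)) (hμ : 1 ≤ μ) (hμk : μ < k)
    (hq : rr μ = p + 1) (heq : ii p = ii (p + 2) ∨ jj p = jj (p + 2)) :
    CutAt n r k rr ii jj (p + 1) ∧ ConnPair n (ii p) (jj p) (ii (p + 1)) (jj (p + 1)) := by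
  obtain ⟨c, L, t, ⟨-, -, -, -, hprime, hcut⟩, htL, hct, hct'⟩ := hcont
  have := h.one_lt_rr hμ hμk.le
  have hend : c (t + 1) = p + 1 := by
    by_contra hne
    have := (hprime t htL).2 μ hμ hμk (by omega) (by omega)
    simp only [hq, Nat.add_sub_cancel] at this
    tauto
  exact ⟨hend ▸ hcut (t + 1) (by omega) htL, (hprime t htL).1 p (by omega) (by omega)⟩

lemma cutAt_of_containedInPF (h : IsAltSnake n r k rr ii jj) {μ p : ℕ}
    (hcont : ContainedInPF n r k rr ii jj p (p + 2)) (hμ : 1 ≤ μ) (hμk : μ < k)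
    (hq : rr μ = p + 1) (heq : ii p = ii (p + 2) ∨ jj p = jj (p + 2)) :
    CutAt n r k rr ii jj p ∧ ConnPair n (ii (p + 1)) (jj (p + 1)) (ii (p + 2)) (jj (p + 2)) := by
  obtain ⟨c, L, t, ⟨-, hc0, -, -, hprime, hcut⟩, htL, hct, hct'⟩ := hcont
  have := h.one_lt_rr hμ hμk.le
  have hstart : c t = p := by
    by_contra hne
    have := (hprime t htL).2 μ hμ hμk (by omega) (by omega)
    simp only [hq, Nat.add_sub_cancel] at this
    tauto
  have ht : 1 ≤ t := Nat.one_le_iff_ne_zero.mpr fun ht => by subst ht; omega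
  exact ⟨hstart ▸ hcut t ht htL.le, (hprime t htL).1 (p + 1) (by omega) (by omega)⟩

lemma false_of_break_after_sright (h : IsAltSnake n r k rr ii jj) {m p : ℕ} (hmk : m + 2 ≤ k)
    (hq : rr (m + 1) = p + 1) (hR : SRight ii jj (rr m - 1) (p + 1))
    (hi : ii p ≤ ii (p + 2)) (hj : jj p ≤ jj (p + 2)) (hmid : ii (p + 1) ≤ jj p)
    (hr : p + 2 ≤ r) (hcont : ContainedInPF n r k rr ii jj (p - 1) (p + 1)) : False := by
  have hL : SLeft ii jj p (rr (m + 2)) := (h.sleft_succ_iff hmk hq).mpr hR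
  have := h.one_le_rr (m := m) (by omega)
  have hrm : rr m < p + 1 := hq ▸ h.rrmono m (by omega)
  have hrm' : p + 1 < rr (m + 2) := hq ▸ h.rrmono (m + 1) (by omega)
  have hinc : ii p < ii (p + 1) ∧ jj p < jj (p + 1) := hR p (by omega) le_rfl
  have hdec : ii (p + 2) < ii (p + 1) ∧ jj (p + 2) < jj (p + 1) := hL (p + 1) le_rfl hrm'
  have heq := h.eq_or_eq_of_break (μ := m + 1) (by omega) (by omega) hq hr hi hj (by omega)
  obtain ⟨hcut, hconn⟩ := h.cutAt_succ_of_containedInPF hcont (by omega) (by omega) hq heq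
  have := h.mem (p + 1) (by omega) (by omega)
  rcases hcut with hpr | hnc | ⟨m', ε, hm', hm'k, hε, hpm', hbc⟩
  · omega
  · exact hnc (show ConnPair n (ii (p + 1)) (jj (p + 1)) (ii (p + 2)) (jj (p + 2)) by
      unfold ConnPair Overlap InIn at *; omega)
  obtain rfl | rfl : ε = 0 ∨ ε = 1 := by omega
  · have := hbc.lt_of_sright (p := p) (by omega) hinc
    omega
  · have hm' : m' = m + 2 := by
      have := (h.rr_lt_rr_iff (a := m + 1) (b := m') (by omega) hm'k.le).mp (by omega)
      have := (h.rr_lt_rr_iff (a := m + 2) (b := m') hmk hm'k.le).not.mp (by omega)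
      omega
    subst hm'
    have hrm₂ : rr (m + 2) = p + 1 + 1 := by omega
    have hrm₃ : rr (m + 2) < rr (m + 3) := h.rrmono (m + 2) hm'k
    have hR' : SRight ii jj (p + 1) (rr (m + 3)) :=
      (h.sright_succ_iff hm'k hrm₂).mpr (by rw [hq, Nat.add_sub_cancel, ← hrm₂]; exact hL)
    have hinc' : ii (p + 2) < ii (p + 3) ∧ jj (p + 2) < jj (p + 3) :=
      hR' (p + 2) le_rfl (by omega)
    have hb : (ii (p + 1) = ii (p + 3) ∧ jj (p + 3) < jj (p + 1)) ∨
        (jj (p + 1) = jj (p + 3) ∧ ii (p + 3) < ii (p + 1)) :=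
      hbc.lt_of_sleft (by omega) hdec
    exact h.nonoverlap (m + 1) p (p + 3) (by omega) (by omega) (by omega) (by omega) (by omega)
      (by have := h.rr_le (m := m + 3) hm'k; omega)
      (Or.inl ⟨by omega, by omega, by omega⟩)

lemma false_of_break_before_sright (h : IsAltSnake n r k rr ii jj) {m p : ℕ} (hmk : m + 2 ≤ k)
    (hq : rr (m + 1) = p + 1) (hR : SRight ii jj p (rr (m + 2)))
    (hi : ii p ≤ ii (p + 2)) (hj : jj p ≤ jj (p + 2)) (hmid : ii (p + 2) ≤ jj (p + 1))
    (hcont : ContainedInPF n r k rr ii jj p (p + 2)) : False := by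
  have hL : SLeft ii jj (rr m - 1) (p + 1) := (h.sright_succ_iff hmk hq).mp hR
  have := h.one_le_rr (m := m) (by omega)
  have hrm : rr m < p + 1 := hq ▸ h.rrmono m (by omega)
  have hrm' : p + 1 < rr (m + 2) := hq ▸ h.rrmono (m + 1) (by omega)
  have hr : p + 2 ≤ r := by have := h.rr_le hmk; omega
  have hdec : ii (p + 1) < ii p ∧ jj (p + 1) < jj p := hL p (by omega) le_rfl
  have hinc : ii (p + 1) < ii (p + 2) ∧ jj (p + 1) < jj (p + 2) := hR (p + 1) le_rfl hrm'
  have heq := h.eq_or_eq_of_break (μ := m + 1) (by omega) (by omega) hq hr hi hj (by omega)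
  obtain ⟨hcut, hconn⟩ := h.cutAt_of_containedInPF hcont (by omega) (by omega) hq heq
  have := h.mem p (by omega) (by omega)
  rcases hcut with hpr | hnc | ⟨m', ε, hm', hm'k, hε, hpm', hbc⟩
  · omega
  · exact hnc (show ConnPair n (ii p) (jj p) (ii (p + 1)) (jj (p + 1)) by
      unfold ConnPair Overlap InIn at *; omega)
  obtain rfl | rfl : ε = 0 ∨ ε = 1 := by omega
  · have hm' : m' = m := by
      have := (h.rr_lt_rr_iff (a := m') (b := m + 1) hm'k.le (by omega)).mp (by omega)
      have := (h.rr_lt_rr_iff (a := m') (b := m) hm'k.le (by omega)).not.mp (by omega)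
      omega
    subst hm'
    obtain ⟨m, rfl⟩ : ∃ m₀, m' = m₀ + 1 := ⟨m' - 1, by omega⟩
    obtain ⟨p, rfl⟩ : ∃ p₀, p = p₀ + 1 := ⟨p - 1, by omega⟩
    simp only [add_assoc, Nat.reduceAdd, Nat.sub_zero] at *
    rw [← hpm', Nat.add_sub_cancel, ← hq] at hL
    have hR' : SRight ii jj (rr m - 1) (p + 1) := (h.sleft_succ_iff (by omega) hpm'.symm).mp hL
    have := h.one_le_rr (m := m) (by omega)
    have := h.rrmono m (by omega)
    have hinc' : ii p < ii (p + 1) ∧ jj p < jj (p + 1) := hR' p (by omega) le_rfl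
    have hb := hbc.lt_of_sright hpm'.symm hinc'
    exact h.nonoverlap (m + 2) p (p + 3) (by omega) (by omega) (by omega) (by omega) (by omega)
      (by omega) (Or.inl ⟨by omega, by omega, by omega⟩)
  · have := hbc.lt_of_sleft (p := p) (by omega) hdec
    omega

theorem eq_of_le_of_lt_succ (h : IsAltSnake n r k rr ii jj) {m p s : ℕ} (hmk : m + 1 ≤ k)
    (hmp : rr m ≤ p) (hpm : p < rr (m + 1))
    (hcont : ContainedInPF n r k rr ii jj (p - 1) (p + 1))
    (hlt : ii p < ii (p + 1)) (hle : ii (p + 1) ≤ jj p) (hs : 1 ≤ s) (hsr : s ≤ r)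
    (hi₁ : ii p ≤ ii s) (hi₂ : ii s < ii (p + 1)) (hj₁ : jj p ≤ jj s) (hj₂ : jj s < jj (p + 1)) :
    s = p := by
  have hR := h.sright_of_lt hmk hmp hpm hlt
  have := h.one_le_rr (m := m) (by omega)
  have hpr : p + 1 ≤ r := by have := h.rr_le hmk; omega
  rcases lt_or_ge s (rr m) with hsm | hms
  · have hm : 1 ≤ m := Nat.one_le_iff_ne_zero.mpr fun hm => by subst hm; have := h.rr0; omega
    exact (h.nonoverlap m s (p + 1) hm (by omega) hs hsm (by omega) hpr
      (Or.inl ⟨hi₂, by omega, hj₂⟩)).elim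
  rcases le_or_gt s (rr (m + 1)) with hsm | hms'
  · have hmem : ∀ t, rr m ≤ t → t ≤ rr (m + 1) → t ∈ Set.Icc (rr m - 1 + 1) (rr (m + 1)) :=
      fun t ht ht' => ⟨by omega, ht'⟩
    have := (hR.strictMonoOn_ii.le_iff_le (hmem p hmp hpm.le) (hmem s hms hsm)).mp hi₁
    have := (hR.strictMonoOn_ii.lt_iff_lt (hmem s hms hsm) (hmem (p + 1) (by omega) hpm)).mp hi₂
    omega
  exfalso
  have hmk' : m + 2 ≤ k := h.lt_of_rr_lt hmk hms' hsr
  obtain hpm' | hq : p + 1 < rr (m + 1) ∨ p + 1 = rr (m + 1) := by omega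
  · exact h.nonoverlap (m + 1) (p + 1) s (by omega) (by omega) (by omega) hpm' hms' hsr
      (Or.inr ⟨hi₂, by omega, hj₂⟩)
  have hL : SLeft ii jj p (rr (m + 2)) := (h.sleft_succ_iff hmk' hq.symm).mpr (hq ▸ hR)
  have hrm' : p + 1 < rr (m + 2) := hq ▸ h.rrmono (m + 1) (by omega)
  have hsm₂ : s ≤ rr (m + 2) := by
    by_contra! hsm₂
    have hmk'' : m + 3 ≤ k := h.lt_of_rr_lt hmk' hsm₂ hsr
    exact h.nonoverlap (m + 2) (p + 1) s (by omega) (by omega) (by omega) hrm' hsm₂ hsr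
      (Or.inr ⟨hi₂, by omega, hj₂⟩)
  have hmem : ∀ t, p + 1 ≤ t → t ≤ rr (m + 2) → t ∈ Set.Icc (p + 1) (rr (m + 2)) :=
    fun t ht ht' => ⟨ht, ht'⟩
  have hs₂ := hmem s (by omega) hsm₂
  have hp₂ := hmem (p + 2) (by omega) (by omega)
  have := (hL.strictAntiOn_ii.le_iff_ge hs₂ hp₂).mpr (by omega)
  have := (hL.strictAntiOn_jj.le_iff_ge hs₂ hp₂).mpr (by omega)
  exact h.false_of_break_after_sright hmk' hq.symm (hq ▸ hR) (by omega) (by omega) hle (by omega)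
    hcont

theorem eq_succ_of_lt_of_le (h : IsAltSnake n r k rr ii jj) {m p s : ℕ} (hmk : m + 1 ≤ k)
    (hmp : rr m ≤ p) (hpm : p < rr (m + 1))
    (hcont : ContainedInPF n r k rr ii jj (p - 1) (p + 1))
    (hlt : ii p < ii (p + 1)) (hle : ii (p + 1) ≤ jj p) (hs : 1 ≤ s) (hsr : s ≤ r)
    (hi₁ : ii p < ii s) (hi₂ : ii s ≤ ii (p + 1)) (hj₁ : jj p < jj s) (hj₂ : jj s ≤ jj (p + 1)) :
    s = p + 1 := by
  have hR := h.sright_of_lt hmk hmp hpm hlt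
  have := h.one_le_rr (m := m) (by omega)
  have hpr : p + 1 ≤ r := by have := h.rr_le hmk; omega
  rcases lt_or_ge (rr (m + 1)) s with hms | hsm
  · exact (h.nonoverlap (m + 1) p s (by omega) (h.lt_of_rr_lt hmk hms hsr) (by omega) hpm hms
      hsr (Or.inl ⟨hi₁, by omega, hj₁⟩)).elim
  rcases le_or_gt (rr m) s with hms | hsm'
  · have hmem : ∀ t, rr m ≤ t → t ≤ rr (m + 1) → t ∈ Set.Icc (rr m - 1 + 1) (rr (m + 1)) :=
      fun t ht ht' => ⟨by omega, ht'⟩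
    have := (hR.strictMonoOn_ii.lt_iff_lt (hmem p hmp hpm.le) (hmem s hms hsm)).mp hi₁
    have := (hR.strictMonoOn_ii.le_iff_le (hmem s hms hsm) (hmem (p + 1) (by omega) hpm)).mp hi₂
    omega
  exfalso
  obtain _ | m := m
  · have := h.rr0; omega
  obtain hmp' | hq : rr (m + 1) < p ∨ rr (m + 1) = p := by omega
  · exact h.nonoverlap (m + 1) s p (by omega) (by omega) hs hsm' hmp' (by omega)
      (Or.inr ⟨hi₁, by omega, hj₁⟩)
  obtain ⟨p, rfl⟩ : ∃ p₀, p = p₀ + 1 := ⟨p - 1, by omega⟩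
  simp only [add_assoc, Nat.reduceAdd, Nat.add_sub_cancel] at *
  have hR' : SRight ii jj p (rr (m + 2)) := by rwa [hq, Nat.add_sub_cancel] at hR
  have hL : SLeft ii jj (rr m - 1) (p + 1) := (h.sright_succ_iff hmk hq).mp hR'
  have := h.one_le_rr (m := m) (by omega)
  have hrm : rr m < p + 1 := hq ▸ h.rrmono m (by omega)
  have hsm₀ : rr m ≤ s := by
    by_contra! hsm₀
    have hm : 1 ≤ m := Nat.one_le_iff_ne_zero.mpr fun hm => by subst hm; have := h.rr0; omega
    exact h.nonoverlap m s (p + 1) hm (by omega) hs hsm₀ hrm (by omega)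
      (Or.inr ⟨hi₁, by omega, hj₁⟩)
  have hmem : ∀ t, rr m ≤ t → t ≤ p + 1 → t ∈ Set.Icc (rr m - 1 + 1) (p + 1) :=
    fun t ht ht' => ⟨by omega, ht'⟩
  have hp₀ := hmem p (by omega) (by omega)
  have hs₀ := hmem s hsm₀ (by omega)
  have := (hL.strictAntiOn_ii.le_iff_ge hp₀ hs₀).mpr (by omega)
  have := (hL.strictAntiOn_jj.le_iff_ge hp₀ hs₀).mpr (by omega)
  exact h.false_of_break_before_sright hmk hq hR' (by omega) (by omega) hle hcont

end IsAltSnake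

lemma sright_neg_iff {a b : ℕ} : SRight (-jj) (-ii) a b ↔ SLeft ii jj a b := by
  simp only [SRight, SLeft, Pi.neg_apply, neg_lt_neg_iff, and_comm]

lemma sleft_neg_iff {a b : ℕ} : SLeft (-jj) (-ii) a b ↔ SRight ii jj a b := by
  simp only [SRight, SLeft, Pi.neg_apply, neg_lt_neg_iff, and_comm]

lemma connPair_neg_iff {i₁ j₁ i₂ j₂ : ℤ} :
    ConnPair n (-j₁) (-i₁) (-j₂) (-i₂) ↔ ConnPair n i₁ j₁ i₂ j₂ := by
  unfold ConnPair Overlap InIn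
  omega

lemma boundaryCond_neg_iff {m ε : ℕ} :
    BoundaryCond k rr (-jj) (-ii) m ε ↔ BoundaryCond k rr ii jj m ε := by
  simp only [BoundaryCond, sleft_neg_iff, sright_neg_iff, Pi.neg_apply, neg_lt_neg_iff, neg_inj]
  tauto

lemma IsAltSnake.neg (h : IsAltSnake n r k rr ii jj) : IsAltSnake n r k rr (-jj) (-ii) where
  hr := h.hr
  hk := h.hk
  mem s hs hs' := by
    have := h.mem s hs hs'
    simp only [InIn, Pi.neg_apply] at this ⊢
    omega
  distinct s p hs hs' hp hp' hsp := by
    simp only [Pi.neg_apply, ne_eq, neg_inj]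
    exact (h.distinct s p hs hs' hp hp' hsp).symm
  rr0 := h.rr0
  rrk := h.rrk
  rrmono := h.rrmono
  mono m hm hmk := by
    rw [sright_neg_iff, sleft_neg_iff]
    exact (h.mono m hm hmk).symm
  alt m hm hmk := by
    obtain ⟨m, rfl⟩ : ∃ m', m = m' + 1 := ⟨m - 1, by omega⟩
    have := h.one_le_rr (m := m + 1) (by omega)
    rw [sright_neg_iff, sleft_neg_iff]
    simpa [show rr (m + 1) - 1 + 1 = rr (m + 1) by omega] using
      (h.sright_succ_iff (m := m) (q := rr (m + 1) - 1) (by omega) (by omega)).symm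
  nonoverlap m s t hm hmk hs hst hst' ht := by
    have := h.nonoverlap m s t hm hmk hs hst hst' ht
    simp only [Overlap, Pi.neg_apply] at this ⊢
    omega

lemma ContainedInPF.neg {a b : ℕ} (hcont : ContainedInPF n r k rr ii jj a b) :
    ContainedInPF n r k rr (-jj) (-ii) a b := by
  obtain ⟨c, L, t, ⟨hL, hc0, hcL, hmono, hprime, hcut⟩, htL, hta, htb⟩ := hcont
  refine ⟨c, L, t, ⟨hL, hc0, hcL, hmono,
    fun u hu => ⟨fun s hs hs' => ?_, fun m hm hmk h₁ h₂ => ?_⟩, fun u hu hu' => ?_⟩, htL, hta, htb⟩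
  · exact connPair_neg_iff.mpr ((hprime u hu).1 s hs hs')
  · simp only [Pi.neg_apply, ne_eq, neg_inj]
    exact ((hprime u hu).2 m hm hmk h₁ h₂).symm
  · simp only [CutAt, connPair_neg_iff, boundaryCond_neg_iff, Pi.neg_apply]
    exact hcut u hu hu'

end

theorem stmt_6_general (n r k : ℕ) (rr : ℕ → ℕ) (ii jj : ℕ → ℤ)
    (h : IsAltSnake n r k rr ii jj)
    (p : ℕ)
    (m : ℕ) (hmk : m + 1 ≤ k) (hmp1 : rr m ≤ p) (hmp2 : p < rr (m + 1))
    (hcont : ContainedInPF n r k rr ii jj (p - 1) (p + 1))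
    (ε : ℕ) (hε : ε ≤ 1)
    (he1 : ii (p + ε) < ii (p + 1 - ε)) (he2 : ii (p + 1 - ε) ≤ jj (p + ε))
    (he3 : jj (p + ε) < jj (p + 1 - ε)) :
    (∀ s, 1 ≤ s → s ≤ r → ii (p + ε) ≤ ii s → ii s < ii (p + 1 - ε) →
      jj (p + ε) ≤ jj s → jj s < jj (p + 1 - ε) → s = p + ε) ∧
    (∀ s, 1 ≤ s → s ≤ r → ii (p + ε) < ii s → ii s ≤ ii (p + 1 - ε) →
      jj (p + ε) < jj s → jj s ≤ jj (p + 1 - ε) → s = p + 1 - ε) := by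
  obtain rfl | rfl : ε = 0 ∨ ε = 1 := by omega
  · simp only [add_zero, Nat.sub_zero] at *
    exact ⟨fun s hs hsr => h.eq_of_le_of_lt_succ hmk hmp1 hmp2 hcont he1 he2 hs hsr,
      fun s hs hsr => h.eq_succ_of_lt_of_le hmk hmp1 hmp2 hcont he1 he2 hs hsr⟩
  -- The reflection `[i, j] ↦ [-j, -i]` turns `ε = 1` into `ε = 0` and exchanges (a) and (b).
  simp only [Nat.add_sub_cancel] at *
  have h' := h.neg
  have hcont' := hcont.neg
  refine ⟨fun s hs hsr hi₁ hi₂ hj₁ hj₂ => ?_, fun s hs hsr hi₁ hi₂ hj₁ hj₂ => ?_⟩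
  · exact h'.eq_succ_of_lt_of_le hmk hmp1 hmp2 hcont' (neg_lt_neg he3) (neg_le_neg he2) hs hsr
      (neg_lt_neg hj₂) (neg_le_neg hj₁) (neg_lt_neg hi₂) (neg_le_neg hi₁)
  · exact h'.eq_of_le_of_lt_succ hmk hmp1 hmp2 hcont' (neg_lt_neg he3) (neg_le_neg he2) hs hsr
      (neg_le_neg hj₂) (neg_lt_neg hj₁) (neg_le_neg hi₂) (neg_lt_neg hi₁)

/-- Lemma (primefactorprop3): with `𝐬(p−1,p+1)` contained in a prime factor of `𝐬`,
`r_m ≤ p < r_{m+1}` and `ε ∈ {0,1}` such that `i_{p+ε} < i_{p+1−ε} ≤ j_{p+ε} < j_{p+1−ε}`: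
(a) any `1 ≤ s ≤ r` with `i_{p+ε} ≤ i_s < i_{p+1−ε} ≤ j_{p+ε} ≤ j_s < j_{p+1−ε}` equals
`p+ε`; (b) any `1 ≤ s ≤ r` with `i_{p+ε} < i_s ≤ i_{p+1−ε} ≤ j_{p+ε} < j_s ≤ j_{p+1−ε}`
equals `p+1−ε`. -/
theorem stmt_6 (n r k : ℕ) (hn : 1 ≤ n) (rr : ℕ → ℕ) (ii jj : ℕ → ℤ)
    (h : IsAltSnake n r k rr ii jj)
    (p : ℕ) (hp1 : 1 ≤ p) (hp2 : p + 1 ≤ r)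
    (m : ℕ) (hmk : m + 1 ≤ k) (hmp1 : rr m ≤ p) (hmp2 : p < rr (m + 1))
    (hcont : ContainedInPF n r k rr ii jj (p - 1) (p + 1))
    (ε : ℕ) (hε : ε ≤ 1)
    (he1 : ii (p + ε) < ii (p + 1 - ε)) (he2 : ii (p + 1 - ε) ≤ jj (p + ε))
    (he3 : jj (p + ε) < jj (p + 1 - ε)) :
    (∀ s, 1 ≤ s → s ≤ r → ii (p + ε) ≤ ii s → ii s < ii (p + 1 - ε) →
      jj (p + ε) ≤ jj s → jj s < jj (p + 1 - ε) → s = p + ε) ∧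
    (∀ s, 1 ≤ s → s ≤ r → ii (p + ε) < ii s → ii s ≤ ii (p + 1 - ε) →
      jj (p + ε) < jj s → jj s ≤ jj (p + 1 - ε) → s = p + 1 - ε) :=
  stmt_6_general n r k rr ii jj h p m hmk hmp1 hmp2 hcont ε hε he1 he2 he3

end AltSnakePaper
end

section
/- Let (𝐬, r(𝐬)) ∈ 𝒮 be connected with r(𝐬) = (1, r_1, r_2) (so k = 2 and r = r_2), and let ε ∈ {0,1}. If a, b is a permutation of i, j (i.e. (a,b) = (i,j) or (a,b) = (j,i)), then a_{r_1−1+2ε} < a_{r_1+1−2ε} implies b_{r_1+1−2ε} ≤ b_{r_1−1+2ε}. -/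
/-!
At the break point `q = r_1` the entry `[i_q, j_q]` is a strict peak or a strict valley of the
snake: it lies strictly above (resp. below) both neighbours in both coordinates, and overlaps
both of them by connectedness. If one neighbour were strictly below the other in both
coordinates, these two overlaps would force the neighbours `[i_{q-1}, j_{q-1}]` and
`[i_{q+1}, j_{q+1}]` to overlap, which (alt2) forbids. Both implications of the statement say
exactly that the two neighbours are incomparable in this sense.
-/

namespace AltSnakePaper

def Precedes (ii jj : ℕ → ℤ) (s t : ℕ) : Prop := ii s < ii t ∧ jj s < jj t

section Intervals

variable {ii jj : ℕ → ℤ} {a b c : ℕ}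

theorem overlap_of_precedes_of_peak_or_valley
    (hpv : (Precedes ii jj a b ∧ Precedes ii jj c b) ∨ (Precedes ii jj b a ∧ Precedes ii jj b c))
    (hab : Overlap (ii a) (jj a) (ii b) (jj b)) (hbc : Overlap (ii b) (jj b) (ii c) (jj c))
    (hac : Precedes ii jj a c) : Overlap (ii a) (jj a) (ii c) (jj c) := by
  unfold Overlap Precedes at *
  omega

theorem overlap_comm {i₁ j₁ i₂ j₂ : ℤ} : Overlap i₁ j₁ i₂ j₂ ↔ Overlap i₂ j₂ i₁ j₁ :=
  Or.comm

theorem not_precedes_of_peak_or_valley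
    (hpv : (Precedes ii jj a b ∧ Precedes ii jj c b) ∨ (Precedes ii jj b a ∧ Precedes ii jj b c))
    (hab : Overlap (ii a) (jj a) (ii b) (jj b)) (hbc : Overlap (ii b) (jj b) (ii c) (jj c))
    (hac : ¬ Overlap (ii a) (jj a) (ii c) (jj c)) :
    ¬ Precedes ii jj a c ∧ ¬ Precedes ii jj c a := by
  refine ⟨fun h => hac (overlap_of_precedes_of_peak_or_valley hpv hab hbc h), fun h => hac ?_⟩
  refine overlap_comm.mp (overlap_of_precedes_of_peak_or_valley ?_ (overlap_comm.mp hbc)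
    (overlap_comm.mp hab) h)
  exact hpv.imp And.symm And.symm

end Intervals

namespace IsAltSnake

variable {n r k : ℕ} {rr : ℕ → ℕ} {ii jj : ℕ → ℤ} {m : ℕ}

theorem rr_mono (h : IsAltSnake n r k rr ii jj) {a b : ℕ} (hab : a ≤ b) (hb : b ≤ k) :
    rr a ≤ rr b := by
  induction b, hab using Nat.le_induction with
  | base => rfl
  | succ b _ ih => exact (ih (by omega)).trans (h.rrmono b (by omega)).le

theorem two_le_rr (h : IsAltSnake n r k rr ii jj) (hm : 1 ≤ m) (hmk : m ≤ k) : 2 ≤ rr m :=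
  calc 2 = rr 0 + 1 := by rw [h.rr0]
    _ ≤ rr 1 := h.rrmono 0 (by omega)
    _ ≤ rr m := h.rr_mono hm hmk

theorem rr_add_one_le (h : IsAltSnake n r k rr ii jj) (hmk : m < k) : rr m + 1 ≤ r :=
  h.rrk ▸ (h.rrmono m hmk).trans_le (h.rr_mono hmk le_rfl)

theorem peak_or_valley (h : IsAltSnake n r k rr ii jj) (hm : 1 ≤ m) (hmk : m < k) :
    (Precedes ii jj (rr m - 1) (rr m) ∧ Precedes ii jj (rr m + 1) (rr m)) ∨
      (Precedes ii jj (rr m) (rr m - 1) ∧ Precedes ii jj (rr m) (rr m + 1)) := by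
  have hq := h.two_le_rr hm hmk.le
  have hprev : 1 ≤ rr (m - 1) := h.rr0 ▸ h.rr_mono (Nat.zero_le _) (by omega)
  have hlt : rr (m - 1) < rr m := by simpa [Nat.sub_add_cancel hm] using h.rrmono (m - 1) (by omega)
  have hnext := h.rrmono m hmk
  have hq1 : rr m - 1 + 1 = rr m := by omega
  have outgoing := h.mono (m + 1) (by omega) hmk
  rw [Nat.add_sub_cancel] at outgoing
  rcases h.mono m hm hmk.le with hR | hL
  · have hin := hR (rr m - 1) (by omega) (by omega)
    have hout := (h.alt m hm hmk).mp hR (rr m) (by omega) (by omega)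
    rw [hq1] at hin
    exact .inl ⟨hin, hout⟩
  · have hin := hL (rr m - 1) (by omega) (by omega)
    rw [hq1] at hin
    refine .inr ⟨hin, ?_⟩
    rcases outgoing with hR' | hL'
    · exact hR' (rr m) (by omega) (by omega)
    · have hback := (h.alt m hm hmk).mpr hL' (rr m - 1) (by omega) (by omega)
      rw [hq1] at hback
      exact absurd hback.1 hin.1.not_gt

theorem not_precedes_around_break (h : IsAltSnake n r k rr ii jj)
    (hc : SegConnected n ii jj 0 r) (hm : 1 ≤ m) (hmk : m < k) :
    ¬ Precedes ii jj (rr m - 1) (rr m + 1) ∧ ¬ Precedes ii jj (rr m + 1) (rr m - 1) := by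
  have hq := h.two_le_rr hm hmk.le
  have hr := h.rr_add_one_le hmk
  have hin := (hc (rr m - 1) (by omega) (by omega)).1
  rw [Nat.sub_add_cancel (by omega : 1 ≤ rr m)] at hin
  exact not_precedes_of_peak_or_valley (h.peak_or_valley hm hmk) hin (hc (rr m) (by omega) (by omega)).1
    (h.nonoverlap m _ _ hm hmk (by omega) (by omega) (by omega) hr)

end IsAltSnake

theorem stmt_7_general (n r : ℕ) (rr : ℕ → ℕ) (ii jj : ℕ → ℤ)
    (h : IsAltSnake n r 2 rr ii jj) (hc : SegConnected n ii jj 0 r)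
    (ε : ℕ) (hε : ε ≤ 1) :
    (ii (rr 1 - 1 + 2 * ε) < ii (rr 1 + 1 - 2 * ε) →
      jj (rr 1 + 1 - 2 * ε) ≤ jj (rr 1 - 1 + 2 * ε)) ∧
    (jj (rr 1 - 1 + 2 * ε) < jj (rr 1 + 1 - 2 * ε) →
      ii (rr 1 + 1 - 2 * ε) ≤ ii (rr 1 - 1 + 2 * ε)) := by
  obtain ⟨hlr, hrl⟩ := h.not_precedes_around_break hc le_rfl one_lt_two
  have hq := h.two_le_rr le_rfl one_le_two
  unfold Precedes at hlr hrl
  interval_cases ε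
  · simp only [Nat.mul_zero, Nat.add_zero, Nat.sub_zero]
    omega
  · rw [show rr 1 - 1 + 2 * 1 = rr 1 + 1 by omega, show rr 1 + 1 - 2 * 1 = rr 1 - 1 by omega]
    omega

/-- Proposition (structure1 (i)): for a connected alternating snake with
`r(𝐬) = (1, r_1, r_2)` and `ε ∈ {0,1}`, if `a,b` is a permutation of `i,j` then
`a_{r_1−1+2ε} < a_{r_1+1−2ε}` implies `b_{r_1+1−2ε} ≤ b_{r_1−1+2ε}`. -/
theorem stmt_7 (n r : ℕ) (hn : 1 ≤ n) (rr : ℕ → ℕ) (ii jj : ℕ → ℤ)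
    (h : IsAltSnake n r 2 rr ii jj) (hc : SegConnected n ii jj 0 r)
    (ε : ℕ) (hε : ε ≤ 1) :
    (ii (rr 1 - 1 + 2 * ε) < ii (rr 1 + 1 - 2 * ε) →
      jj (rr 1 + 1 - 2 * ε) ≤ jj (rr 1 - 1 + 2 * ε)) ∧
    (jj (rr 1 - 1 + 2 * ε) < jj (rr 1 + 1 - 2 * ε) →
      ii (rr 1 + 1 - 2 * ε) ≤ ii (rr 1 - 1 + 2 * ε)) :=
  stmt_7_general n r rr ii jj h hc ε hε

end AltSnakePaper
end

section
/- Let (𝐬, r(𝐬)) ∈ 𝒮 be connected with r(𝐬) = (1, r_1, r_2) (so k = 2, r = r_2, r_0 = 1), and let ε ∈ {0,1}. If r_ε + ε ≤ p < r_{1+ε} + ε is such that i_p ≤ i_{r_1+1−2ε} < j_{r_1+1−2ε} ≤ j_p, then i_p ≤ i_s < j_s ≤ j_p for all s with r_{1−ε} − ε < s ≤ r_{2−ε} − ε. -/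
namespace AltSnakePaper

/-!
Consecutive entries of a connected snake overlap, while (alt2) forbids every entry on the
other side of the break `r_1` from overlapping `[i_p, j_p]`. An interval that overlaps one
nested in `[i_p, j_p]` but does not overlap `[i_p, j_p]` cannot stick out of it, so nesting
propagates from the entry `r_1 + 1 - 2ε` along that whole side of the snake.
-/

theorem Overlap.symm {i1 j1 i2 j2 : ℤ} (h : Overlap i1 j1 i2 j2) : Overlap i2 j2 i1 j1 :=
  Or.symm h

theorem Overlap.lt_and_lt {i1 j1 i2 j2 : ℤ} (h : Overlap i1 j1 i2 j2) : i1 < j1 ∧ i2 < j2 := by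
  rcases h with ⟨_, _, _⟩ | ⟨_, _, _⟩ <;> constructor <;> omega

theorem nested_of_overlap_of_not_overlap {ip jp i j i' j' : ℤ} (hnest : ip ≤ i ∧ j ≤ jp)
    (hov : Overlap i j i' j') (hno : ¬ Overlap ip jp i' j') : ip ≤ i' ∧ j' ≤ jp := by
  unfold Overlap at hov hno
  omega

section Chain

variable {ii jj : ℕ → ℤ} {ip jp : ℤ} {a b : ℕ}

theorem nested_of_overlap_chain_up (hbase : ip ≤ ii a ∧ jj a ≤ jp)
    (hov : ∀ s, a ≤ s → s < b → Overlap (ii s) (jj s) (ii (s + 1)) (jj (s + 1)))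
    (hno : ∀ t, a < t → t ≤ b → ¬ Overlap ip jp (ii t) (jj t)) :
    ∀ s, a ≤ s → s ≤ b → ip ≤ ii s ∧ jj s ≤ jp := by
  intro s has
  induction s, has using Nat.le_induction with
  | base => exact fun _ ↦ hbase
  | succ s has ih =>
    intro hsb
    exact nested_of_overlap_of_not_overlap (ih (by omega)) (hov s has hsb) (hno _ (by omega) hsb)

theorem nested_of_overlap_chain_down (hbase : ip ≤ ii b ∧ jj b ≤ jp)
    (hov : ∀ s, a ≤ s → s < b → Overlap (ii s) (jj s) (ii (s + 1)) (jj (s + 1)))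
    (hno : ∀ t, a ≤ t → t < b → ¬ Overlap (ii t) (jj t) ip jp) :
    ∀ s, a ≤ s → s ≤ b → ip ≤ ii s ∧ jj s ≤ jp := by
  intro s has hsb
  induction hsb using Nat.decreasingInduction with
  | self => exact hbase
  | of_succ s hsb ih =>
    exact nested_of_overlap_of_not_overlap (ih (by omega)) (hov s has hsb).symm
      fun h ↦ hno s has hsb h.symm

end Chain

theorem SegConnected.ii_lt_jj {n : ℕ} {ii jj : ℕ → ℤ} {a b s : ℕ} (hc : SegConnected n ii jj a b)
    (hab : a + 2 ≤ b) (has : a < s) (hsb : s ≤ b) : ii s < jj s := by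
  rcases Nat.lt_or_eq_of_le hsb with hsb | rfl
  · exact (hc s has hsb).1.lt_and_lt.1
  · have := (hc (s - 1) (by omega) (by omega)).1.lt_and_lt.2
    rwa [Nat.sub_add_cancel (by omega)] at this

namespace IsAltSnake

variable {n r k : ℕ} {rr : ℕ → ℕ} {ii jj : ℕ → ℤ} {m p : ℕ}

theorem nested_of_lt_break (h : IsAltSnake n r k rr ii jj) (hc : SegConnected n ii jj 0 r)
    (hm : 1 ≤ m) (hmk : m < k) (hp : 1 ≤ p) (hpm : p < rr m)
    (hbase : ii p ≤ ii (rr m + 1) ∧ jj (rr m + 1) ≤ jj p) :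
    ∀ s, rr m < s → s ≤ r → ii p ≤ ii s ∧ jj s ≤ jj p :=
  nested_of_overlap_chain_up hbase (fun t hmt htr ↦ (hc t (by omega) htr).1)
    fun t hmt htr ↦ h.nonoverlap m p t hm hmk hp hpm (by omega) htr

theorem nested_of_break_lt (h : IsAltSnake n r k rr ii jj) (hc : SegConnected n ii jj 0 r)
    (hm : 1 ≤ m) (hmk : m < k) (hmp : rr m < p) (hpr : p ≤ r)
    (hbase : ii p ≤ ii (rr m - 1) ∧ jj (rr m - 1) ≤ jj p) :
    ∀ s, 1 ≤ s → s < rr m → ii p ≤ ii s ∧ jj s ≤ jj p :=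
  fun s hs hsm ↦ nested_of_overlap_chain_down hbase (fun t ht htm ↦ (hc t (by omega) (by omega)).1)
    (fun t ht htm ↦ h.nonoverlap m t p hm hmk ht (by omega) hmp hpr) s hs (by omega)

end IsAltSnake

theorem stmt_8_general (n r : ℕ) (rr : ℕ → ℕ) (ii jj : ℕ → ℤ)
    (h : IsAltSnake n r 2 rr ii jj) (hc : SegConnected n ii jj 0 r)
    (ε : ℕ) (hε : ε ≤ 1) (p : ℕ)
    (hp1 : rr ε + ε ≤ p) (hp2 : p < rr (1 + ε) + ε)
    (hip : ii p ≤ ii (rr 1 + 1 - 2 * ε))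
    (hjp : jj (rr 1 + 1 - 2 * ε) ≤ jj p) :
    ∀ s, rr (1 - ε) - ε < s → s ≤ rr (2 - ε) - ε →
      ii p ≤ ii s ∧ ii s < jj s ∧ jj s ≤ jj p := by
  have h01 := h.rrmono 0 (by norm_num)
  have h12 := h.rrmono 1 (by norm_num)
  have hr0 := h.rr0
  have hr2 := h.rrk
  intro s hs1 hs2
  interval_cases ε
  · simp only [Nat.mul_zero, Nat.add_zero, Nat.sub_zero] at hp1 hp2 hip hjp hs1 hs2
    have hnest := h.nested_of_lt_break hc le_rfl one_lt_two (by omega) hp2 ⟨hip, hjp⟩ s hs1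
      (by omega)
    exact ⟨hnest.1, hc.ii_lt_jj (by omega) (by omega) (by omega), hnest.2⟩
  · simp only [Nat.reduceAdd, Nat.reduceSub] at hp1 hp2 hs1 hs2
    rw [show rr 1 + 1 - 2 * 1 = rr 1 - 1 by omega] at hip hjp
    have hnest := h.nested_of_break_lt hc le_rfl one_lt_two (by omega) (by omega) ⟨hip, hjp⟩ s
      (by omega) (by omega)
    exact ⟨hnest.1, hc.ii_lt_jj (by omega) (by omega) (by omega), hnest.2⟩

/-- Proposition (structure1 (ii)): for a connected alternating snake with
`r(𝐬) = (1, r_1, r_2)` and `ε ∈ {0,1}`, if `r_ε + ε ≤ p < r_{1+ε} + ε` satisfies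
`i_p ≤ i_{r_1+1−2ε} < j_{r_1+1−2ε} ≤ j_p` then `i_p ≤ i_s < j_s ≤ j_p` for all
`r_{1−ε} − ε < s ≤ r_{2−ε} − ε`. -/
theorem stmt_8 (n r : ℕ) (hn : 1 ≤ n) (rr : ℕ → ℕ) (ii jj : ℕ → ℤ)
    (h : IsAltSnake n r 2 rr ii jj) (hc : SegConnected n ii jj 0 r)
    (ε : ℕ) (hε : ε ≤ 1) (p : ℕ)
    (hp1 : rr ε + ε ≤ p) (hp2 : p < rr (1 + ε) + ε)
    (hip : ii p ≤ ii (rr 1 + 1 - 2 * ε))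
    (hij : ii (rr 1 + 1 - 2 * ε) < jj (rr 1 + 1 - 2 * ε))
    (hjp : jj (rr 1 + 1 - 2 * ε) ≤ jj p) :
    ∀ s, rr (1 - ε) - ε < s → s ≤ rr (2 - ε) - ε →
      ii p ≤ ii s ∧ ii s < jj s ∧ jj s ≤ jj p :=
  stmt_8_general n r rr ii jj h hc ε hε p hp1 hp2 hip hjp

end AltSnakePaper
end
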